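/- Suppose an elliptic K3 surface has reducible fibers I_5, I_3, I_2, I_7, I_0^*, so that for any section P the quantity 2ĥ(P) = 8 + 4(P.O) − 2Σ_v corr_v(P) is a 2-adic integer, where each correction term corr_v(P) lies in (1/2)Z ∪ (i(5−i)/5 : i) ∪ (i(3−i)/3 : i) ∪ (i(7−i)/7 : i) ∪ {0,1}. Then 4 divides the integer 840·ĥ(P) whenever 840·ĥ(P) ∈ Z. -/
import Mathlib


/-- For an elliptic K3 surface with reducible fibers `I₅, I₃, I₂, I₇, I₀*`, the height
`ĥ(P) = 4 + 2(P.O) − Σ corr_v(P)` of any section `P` (with `(P.O)` a nonnegative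
integer, corrections `i(n−i)/n` at `I_n` fibers and `0` or `1` at `I₀*`) satisfies:
`4` divides the integer `840·ĥ(P)` whenever `840·ĥ(P) ∈ ℤ`. -/
theorem stmt_10 (pO : ℕ) (c5 c3 c2 c7 cs h : ℚ)
    (h5 : ∃ i : ℕ, i < 5 ∧ c5 = (i : ℚ) * (5 - (i : ℚ)) / 5)
    (h3 : ∃ i : ℕ, i < 3 ∧ c3 = (i : ℚ) * (3 - (i : ℚ)) / 3)
    (h2 : ∃ i : ℕ, i < 2 ∧ c2 = (i : ℚ) * (2 - (i : ℚ)) / 2)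
    (h7 : ∃ i : ℕ, i < 7 ∧ c7 = (i : ℚ) * (7 - (i : ℚ)) / 7)
    (hs : cs = 0 ∨ cs = 1)
    (hh : h = 4 + 2 * (pO : ℚ) - (c5 + c3 + c2 + c7 + cs)) :
    ∀ m : ℤ, 840 * h = (m : ℚ) → (4 : ℤ) ∣ m := by
  obtain ⟨a, -, rfl⟩ := h5
  obtain ⟨b, -, rfl⟩ := h3
  obtain ⟨c, -, rfl⟩ := h2
  obtain ⟨d, -, rfl⟩ := h7
  intro m hm
  subst hh
  rcases hs with rfl | rfl
  · have key : m = 3360 + 1680 * (pO : ℤ) - 168 * ((a : ℤ) * (5 - (a : ℤ)))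
        - 280 * ((b : ℤ) * (3 - (b : ℤ))) - 420 * ((c : ℤ) * (2 - (c : ℤ)))
        - 120 * ((d : ℤ) * (7 - (d : ℤ))) := by
      have : (m : ℚ) = ((3360 + 1680 * (pO : ℤ) - 168 * ((a : ℤ) * (5 - (a : ℤ)))
          - 280 * ((b : ℤ) * (3 - (b : ℤ))) - 420 * ((c : ℤ) * (2 - (c : ℤ)))
          - 120 * ((d : ℤ) * (7 - (d : ℤ))) : ℤ) : ℚ) := by
        rw [← hm]; push_cast; ring
      exact_mod_cast this
    generalize (a : ℤ) * (5 - (a : ℤ)) = x at key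
    generalize (b : ℤ) * (3 - (b : ℤ)) = y at key
    generalize (c : ℤ) * (2 - (c : ℤ)) = z at key
    generalize (d : ℤ) * (7 - (d : ℤ)) = w at key
    omega
  · have key : m = 2520 + 1680 * (pO : ℤ) - 168 * ((a : ℤ) * (5 - (a : ℤ)))
        - 280 * ((b : ℤ) * (3 - (b : ℤ))) - 420 * ((c : ℤ) * (2 - (c : ℤ)))
        - 120 * ((d : ℤ) * (7 - (d : ℤ))) := by
      have : (m : ℚ) = ((2520 + 1680 * (pO : ℤ) - 168 * ((a : ℤ) * (5 - (a : ℤ)))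
          - 280 * ((b : ℤ) * (3 - (b : ℤ))) - 420 * ((c : ℤ) * (2 - (c : ℤ)))
          - 120 * ((d : ℤ) * (7 - (d : ℤ))) : ℤ) : ℚ) := by
        rw [← hm]; push_cast; ring
      exact_mod_cast this
    generalize (a : ℤ) * (5 - (a : ℤ)) = x at key
    generalize (b : ℤ) * (3 - (b : ℤ)) = y at key
    generalize (c : ℤ) * (2 - (c : ℤ)) = z at key
    generalize (d : ℤ) * (7 - (d : ℤ)) = w at key
    omega
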